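/- arXiv:1411.4757 — 2 statements merged into one kernel-verified Lean document; each statement's English description precedes it below -/
import Mathlib

section
/- Let u : ℕ+ → ℕ be non-decreasing. The number of u-parking functions on n labeled elements, 𝔣(u;n), satisfies the recurrence 𝔣(u;n) = Σ_{j=1}^{n} (-1)^{j-1} · C(n,j) · u(n-j+1)^j · 𝔣(u; n-j), with 𝔣(u;0) = 1. -/
/-- `f : Fin n → ℕ+` is a `u`-parking function. -/
def IsUPark (n : ℕ) (u : ℕ → ℕ) (f : Fin n → ℕ+) : Prop :=
  ∀ k ∈ Finset.Icc 1 n,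
    k ≤ (Finset.univ.filter (fun i : Fin n => (f i : ℕ) ≤ u k)).card

/-- The number of `u`-parking functions on `n` labeled elements. -/
noncomputable def parkCount (u : ℕ → ℕ) (n : ℕ) : ℕ :=
  Nat.card {f : Fin n → ℕ+ // IsUPark n u f}

/-! Sort the functions `f : ι → ℕ+` with values at most `x` by their parked set: if the
`(j + 1)`-st parking condition is the first one to fail, then `S = {i | f i ≤ u (j + 1)}` has
exactly `j` elements, `f` is a `u`-parking function on `S`, and `f` takes its values in
`(u (j + 1), x]` off `S`; conversely these three properties determine `S`. Counting gives
`x ^ n = ∑ j, C(n, j) 𝔣(u; j) (x - u (j + 1)) ^ (n - j)` for all large `x`, hence as an identity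
of polynomials, and at `x = 0` it is the recurrence. -/

open Finset

section Values

lemma card_filter_restrict {α : Type*} (S : Finset α) (p : α → Prop) [DecidablePred p] :
    #{i : S | p i} = #{i ∈ S | p i} := by
  rw [univ_eq_attach, filter_attach, card_map, card_attach]

def pnatIocEquiv (a x : ℕ) : {v : ℕ+ // a < (v : ℕ) ∧ (v : ℕ) ≤ x} ≃ Ioc a x where
  toFun v := ⟨v.1, mem_Ioc.2 v.2⟩
  invFun n := ⟨⟨n.1, (Nat.zero_le a).trans_lt (mem_Ioc.1 n.2).1⟩, mem_Ioc.1 n.2⟩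
  left_inv _ := rfl
  right_inv _ := rfl

instance (a x : ℕ) : Finite {v : ℕ+ // a < (v : ℕ) ∧ (v : ℕ) ≤ x} :=
  Finite.of_equiv _ (pnatIocEquiv a x).symm

lemma natCard_pnat_Ioc (a x : ℕ) : Nat.card {v : ℕ+ // a < (v : ℕ) ∧ (v : ℕ) ≤ x} = x - a := by
  rw [Nat.card_congr (pnatIocEquiv a x), Nat.card_eq_finsetCard, Nat.card_Ioc]

def pnatLeEquiv (x : ℕ) : {v : ℕ+ // (v : ℕ) ≤ x} ≃ {v : ℕ+ // 0 < (v : ℕ) ∧ (v : ℕ) ≤ x} :=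
  Equiv.subtypeEquivRight fun v => ⟨fun h => ⟨v.pos, h⟩, And.right⟩

instance (x : ℕ) : Finite {v : ℕ+ // (v : ℕ) ≤ x} := Finite.of_equiv _ (pnatLeEquiv x).symm

lemma natCard_pnat_le (x : ℕ) : Nat.card {v : ℕ+ // (v : ℕ) ≤ x} = x := by
  rw [Nat.card_congr (pnatLeEquiv x), natCard_pnat_Ioc, Nat.sub_zero]

variable {ι : Type*} [Fintype ι]

def boundedEquiv (ι : Type*) (x : ℕ) :
    {f : ι → ℕ+ // ∀ i, (f i : ℕ) ≤ x} ≃ (ι → {v : ℕ+ // (v : ℕ) ≤ x}) :=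
  Equiv.subtypePiEquivPi (β := fun _ => ℕ+) (p := fun _ v => (v : ℕ) ≤ x)

instance (x : ℕ) : Finite {f : ι → ℕ+ // ∀ i, (f i : ℕ) ≤ x} :=
  Finite.of_equiv _ (boundedEquiv ι x).symm

lemma natCard_bounded (x : ℕ) :
    Nat.card {f : ι → ℕ+ // ∀ i, (f i : ℕ) ≤ x} = x ^ Fintype.card ι := by
  rw [Nat.card_congr (boundedEquiv ι x), Nat.card_fun, natCard_pnat_le, Nat.card_eq_fintype_card]

end Values

section Parking

variable {ι κ : Type*} [Fintype ι] [Fintype κ] {u : ℕ → ℕ}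

def ParksUpTo (u : ℕ → ℕ) (f : ι → ℕ+) (k : ℕ) : Prop :=
  ∀ m ∈ Icc 1 k, m ≤ #{i | (f i : ℕ) ≤ u m}

lemma parksUpTo_comp_equiv (e : κ ≃ ι) {f : ι → ℕ+} {k : ℕ} :
    ParksUpTo u (f ∘ e) k ↔ ParksUpTo u f k := by
  refine forall₂_congr fun m _ => ?_
  have : #{i | ((f ∘ e) i : ℕ) ≤ u m} = #{i | (f i : ℕ) ≤ u m} := card_equiv e (by simp)
  rw [this]

lemma natCard_parksUpTo_congr (e : ι ≃ κ) (k : ℕ) :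
    Nat.card {g : ι → ℕ+ // ParksUpTo u g k} = Nat.card {g : κ → ℕ+ // ParksUpTo u g k} :=
  Nat.card_congr <| (e.arrowCongr (Equiv.refl ℕ+)).subtypeEquiv fun _ =>
    (parksUpTo_comp_equiv e.symm).symm

lemma parkCount_eq_natCard (u : ℕ → ℕ) (ι : Type*) [Fintype ι] :
    parkCount u (Fintype.card ι) = Nat.card {g : ι → ℕ+ // ParksUpTo u g (Fintype.card ι)} :=
  (natCard_parksUpTo_congr (Fintype.equivFin ι) _).symm

lemma le_of_parksUpTo_card {f : ι → ℕ+} (hf : ParksUpTo u f (Fintype.card ι)) (i : ι) :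
    (f i : ℕ) ≤ u (Fintype.card ι) := by
  have hcard := hf _ (mem_Icc.2 ⟨Fintype.card_pos_iff.2 ⟨i⟩, le_rfl⟩)
  have huniv := eq_univ_of_card _ (hcard.antisymm' (card_le_univ _))
  have hi : i ∈ ({i | (f i : ℕ) ≤ u (Fintype.card ι)} : Finset ι) := by
    rw [huniv]
    exact mem_univ i
  simpa using hi

lemma parksUpTo_iff_forall_lt {f : ι → ℕ+} {j : ℕ} :
    ParksUpTo u f j ↔ ∀ k < j, ¬ #{i | (f i : ℕ) ≤ u (k + 1)} ≤ k := by
  refine ⟨fun h k hk => not_le.2 (h (k + 1) (mem_Icc.2 ⟨by omega, hk⟩)), fun h m hm => ?_⟩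
  obtain ⟨k, rfl⟩ : ∃ k, m = k + 1 := ⟨m - 1, by grind⟩
  exact not_le.1 (h k (by grind))

/-- The first `k` for which the `(k + 1)`-st parking condition fails for `f`. -/
noncomputable def parkingLength (u : ℕ → ℕ) (f : ι → ℕ+) : ℕ :=
  Nat.find (⟨Fintype.card ι, card_le_univ _⟩ : ∃ k, #{i | (f i : ℕ) ≤ u (k + 1)} ≤ k)

noncomputable def parkedSet (u : ℕ → ℕ) (f : ι → ℕ+) : Finset ι :=
  {i | (f i : ℕ) ≤ u (parkingLength u f + 1)}

lemma parkingLength_eq_iff {f : ι → ℕ+} {j : ℕ} :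
    parkingLength u f = j ↔ #{i | (f i : ℕ) ≤ u (j + 1)} ≤ j ∧ ParksUpTo u f j := by
  rw [parkingLength, Nat.find_eq_iff, parksUpTo_iff_forall_lt]

lemma card_parkedSet (hu : Monotone u) (f : ι → ℕ+) :
    #(parkedSet u f) = parkingLength u f := by
  obtain ⟨hle, hpark⟩ := parkingLength_eq_iff.1 (rfl : parkingLength u f = _)
  refine hle.antisymm ?_
  rcases Nat.eq_zero_or_pos (parkingLength u f) with h | h
  · omega
  calc parkingLength u f ≤ #{i | (f i : ℕ) ≤ u (parkingLength u f)} :=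
        hpark _ (mem_Icc.2 ⟨h, le_rfl⟩)
    _ ≤ #(parkedSet u f) :=
        card_le_card fun i => by simpa [parkedSet] using fun hi => hi.trans (hu (by omega))

lemma filter_le_eq_filter_mem (hu : Monotone u) {f : ι → ℕ+} {S : Finset ι}
    (hout : ∀ i ∉ S, u (#S + 1) < f i) {m : ℕ} (hm : m ≤ #S + 1) :
    ({i | (f i : ℕ) ≤ u m} : Finset ι) = {i ∈ S | (f i : ℕ) ≤ u m} := by
  ext i
  simp only [mem_filter, mem_univ, true_and]
  refine ⟨fun hi => ⟨?_, hi⟩, And.right⟩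
  by_contra hiS
  exact (hout i hiS).not_ge (hi.trans (hu hm))

lemma parksUpTo_iff_restrict (hu : Monotone u) {f : ι → ℕ+} {S : Finset ι}
    (hout : ∀ i ∉ S, u (#S + 1) < f i) :
    ParksUpTo u f #S ↔ ParksUpTo u (S.restrict f) #S := by
  refine forall₂_congr fun m hm => ?_
  rw [filter_le_eq_filter_mem hu hout (by grind), ← card_filter_restrict]
  rfl

def ParkedOn (u : ℕ → ℕ) (x : ℕ) (S : Finset ι) (f : ι → ℕ+) : Prop :=
  ParksUpTo u (S.restrict f) #S ∧ ∀ i ∉ S, u (#S + 1) < f i ∧ (f i : ℕ) ≤ x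

lemma bounded_and_parkedSet_eq_iff (hu : Monotone u) {x : ℕ} (hx : u (Fintype.card ι) ≤ x)
    (S : Finset ι) (f : ι → ℕ+) :
    ((∀ i, (f i : ℕ) ≤ x) ∧ parkedSet u f = S) ↔ ParkedOn u x S f := by
  constructor
  · rintro ⟨hfx, rfl⟩
    have hout : ∀ i ∉ parkedSet u f, u (#(parkedSet u f) + 1) < f i := by
      intro i hi
      rw [card_parkedSet hu]
      simpa [parkedSet] using hi
    obtain ⟨-, hpark⟩ := parkingLength_eq_iff.1 (card_parkedSet hu f).symm
    exact ⟨(parksUpTo_iff_restrict hu hout).1 hpark, fun i hi => ⟨hout i hi, hfx i⟩⟩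
  · rintro ⟨hpark, hbound⟩
    have hout i (hi : i ∉ S) : u (#S + 1) < f i := (hbound i hi).1
    have hS i (hi : i ∈ S) : (f i : ℕ) ≤ u #S := by
      have := le_of_parksUpTo_card (f := S.restrict f) (by rwa [Fintype.card_coe]) ⟨i, hi⟩
      rwa [Fintype.card_coe] at this
    have hlength : parkingLength u f = #S := by
      refine parkingLength_eq_iff.2 ⟨?_, (parksUpTo_iff_restrict hu hout).2 hpark⟩
      rw [filter_le_eq_filter_mem hu hout le_rfl]
      exact card_filter_le _ _
    refine ⟨fun i => ?_, ?_⟩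
    · by_cases hi : i ∈ S
      · exact (hS i hi).trans ((hu (card_le_univ S)).trans hx)
      · exact (hbound i hi).2
    · rw [parkedSet, hlength, filter_le_eq_filter_mem hu hout le_rfl, filter_true_of_mem]
      exact fun i hi => (hS i hi).trans (hu (Nat.le_succ _))

variable [DecidableEq ι]

def parkedOnEquiv (u : ℕ → ℕ) (x : ℕ) (S : Finset ι) :
    {f : ι → ℕ+ // ParkedOn u x S f} ≃
      {g : S → ℕ+ // ParksUpTo u g #S} ×
        ({i // i ∉ S} → {v : ℕ+ // u (#S + 1) < (v : ℕ) ∧ (v : ℕ) ≤ x}) :=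
  ((Equiv.piEquivPiSubtypeProd (· ∈ S) fun _ => ℕ+).subtypeEquiv fun _ => by
      simp only [ParkedOn, Subtype.forall]
      rfl).trans
    (Equiv.subtypeProdEquivProd.trans (Equiv.prodCongr (Equiv.refl _) Equiv.subtypePiEquivPi))

lemma natCard_parkedOn (u : ℕ → ℕ) (x : ℕ) (S : Finset ι) :
    Nat.card {f : ι → ℕ+ // ParkedOn u x S f} =
      parkCount u #S * (x - u (#S + 1)) ^ (Fintype.card ι - #S) := by
  rw [Nat.card_congr (parkedOnEquiv u x S), Nat.card_prod, Nat.card_fun, natCard_pnat_Ioc]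
  have hpark := parkCount_eq_natCard u S
  rw [Fintype.card_coe] at hpark
  rw [← hpark, Nat.card_eq_fintype_card, Fintype.card_subtype_compl, Fintype.card_coe]

theorem pow_card_eq_sum_parkCount (hu : Monotone u) {x : ℕ} (hx : u (Fintype.card ι) ≤ x) :
    x ^ Fintype.card ι = ∑ m ∈ range (Fintype.card ι + 1),
      (Fintype.card ι).choose m * (parkCount u m * (x - u (m + 1)) ^ (Fintype.card ι - m)) := by
  calc x ^ Fintype.card ι = Nat.card {f : ι → ℕ+ // ∀ i, (f i : ℕ) ≤ x} :=
        (natCard_bounded x).symm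
    _ = ∑ S : Finset ι,
          Nat.card {f : {f : ι → ℕ+ // ∀ i, (f i : ℕ) ≤ x} // parkedSet u f.1 = S} := by
      rw [← Nat.card_sigma, Nat.card_congr (Equiv.sigmaFiberEquiv _)]
    _ = ∑ S : Finset ι, Nat.card {f : ι → ℕ+ // ParkedOn u x S f} :=
      sum_congr rfl fun S _ => Nat.card_congr <| (Equiv.subtypeSubtypeEquivSubtypeInter _ _).trans
        (Equiv.subtypeEquivRight fun f => bounded_and_parkedSet_eq_iff hu hx S f)
    _ = _ := by
      simp_rw [natCard_parkedOn]
      rw [← powerset_univ, sum_powerset_apply_card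
        (fun m => parkCount u m * (x - u (m + 1)) ^ (Fintype.card ι - m)), card_univ]
      simp

end Parking

open Polynomial in
theorem sum_choose_mul_parkCount_mul_neg_pow_eq_zero {u : ℕ → ℕ} (hu : Monotone u) {n : ℕ}
    (hn : n ≠ 0) :
    ∑ j ∈ range (n + 1), (n.choose j : ℤ) * parkCount u j * (-(u (j + 1) : ℤ)) ^ (n - j) = 0 := by
  set q : ℤ[X] := ∑ j ∈ range (n + 1),
    C ((n.choose j : ℤ) * parkCount u j) * (X - C (u (j + 1) : ℤ)) ^ (n - j)
  have hq : X ^ n = q := by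
    refine eq_of_infinite_eval_eq _ _ <| Set.infinite_of_injective_forall_mem
      (f := fun k : ℕ => ((k + u (n + 1) : ℕ) : ℤ)) (fun a b h => by simpa using h) fun k => ?_
    have hx : u (n + 1) ≤ k + u (n + 1) := Nat.le_add_left _ _
    have h := pow_card_eq_sum_parkCount (ι := Fin n) hu
      (by simpa using (hu (Nat.le_succ n)).trans hx)
    simp only [Fintype.card_fin] at h
    simp only [Set.mem_ofPred_eq, eval_pow, eval_X, q, eval_finsetSum, eval_mul, eval_C, eval_sub]
    rw [← Nat.cast_pow, h]
    push_cast
    refine sum_congr rfl fun j hj => ?_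
    rw [Nat.cast_sub ((hu (by simpa [Nat.lt_succ_iff] using hj)).trans hx)]
    push_cast
    ring
  simpa [q, eval_finsetSum, hn] using (congrArg (eval 0) hq).symm

/-- Kung–Yan recurrence: `𝔣(u;0) = 1` and
`𝔣(u;n) = ∑_{j=1}^n (-1)^{j-1} C(n,j) u(n-j+1)^j 𝔣(u;n-j)`. -/
theorem stmt_3 (u : ℕ → ℕ) (hu : Monotone u) :
    parkCount u 0 = 1 ∧
    ∀ n : ℕ, 1 ≤ n →
      (parkCount u n : ℤ) =
        ∑ j ∈ Finset.Icc 1 n,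
          (-1) ^ (j - 1) * (n.choose j : ℤ) * ((u (n - j + 1) : ℤ)) ^ j *
            (parkCount u (n - j) : ℤ) := by
  refine ⟨?_, fun n hn => ?_⟩
  · simp [parkCount, IsUPark]
  have h := sum_choose_mul_parkCount_mul_neg_pow_eq_zero hu (n := n) (by omega)
  rw [← sum_range_reflect, range_eq_Ico, sum_eq_sum_Ico_succ_bot (by omega),
    Ico_add_one_right_eq_Icc] at h
  have hterm : ∀ j ∈ Icc 1 n, (n.choose (n - j) : ℤ) * parkCount u (n - j) *
      (-(u (n - j + 1) : ℤ)) ^ (n - (n - j)) =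
      -((-1) ^ (j - 1) * (n.choose j : ℤ) * (u (n - j + 1) : ℤ) ^ j * parkCount u (n - j)) := by
    intro j hj
    obtain ⟨k, rfl⟩ : ∃ k, j = k + 1 := ⟨j - 1, by grind⟩
    rw [Nat.sub_sub_self (by grind), Nat.choose_symm (by grind), neg_pow, pow_succ (-1 : ℤ),
      Nat.add_sub_cancel]
    ring
  simp only [Nat.add_sub_cancel, Nat.sub_zero, zero_add, Nat.choose_self, Nat.sub_self,
    pow_zero, Nat.cast_one, one_mul, mul_one, sum_congr rfl hterm, sum_neg_distrib] at h
  linarith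
end

section
/- For the weight u(m) = m (ordinary parking functions), the count from Kung–Yan's recurrence 𝔣(u;n) = Σ_{j=1}^n (-1)^{j-1} C(n,j) (n-j+1)^j 𝔣(u;n-j), 𝔣(u;0)=1, equals (n+1)^{n-1} for all n ≥ 0. -/
/-- The Kung–Yan sequence `𝔣(u;n)`: `𝔣(u;0)=1` and
`𝔣(u;n) = ∑_{j=1}^n (-1)^{j-1} C(n,j) u(n-j+1)^j 𝔣(u;n-j)`. -/
def fSeq (u : ℕ → ℕ) : ℕ → ℤ
  | 0 => 1
  | n + 1 =>
    ∑ j ∈ (Finset.Icc 1 (n + 1)).attach,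
      (-1) ^ ((j : ℕ) - 1) * ((n + 1).choose j : ℤ) *
        (u (n + 1 - (j : ℕ) + 1) : ℤ) ^ (j : ℕ) * fSeq u (n + 1 - (j : ℕ))
decreasing_by have := Finset.mem_Icc.mp j.2; omega

/-!
Substituting `𝔣(u;k) = (k+1)^{k-1}` for `k ≤ n` into the recurrence, the `j`-th term becomes
`(-1)^{j-1} C(n+1,j) (n+2-j)^n`. The recurrence therefore reduces to the vanishing of the
alternating sum `∑_j (-1)^j C(n+1,j) (n+2-j)^n`, which is the `(n+1)`-st forward difference of
the degree-`n` polynomial `x ↦ x^n`.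
-/

open Finset fwdDiff

theorem sum_range_alternating_choose_mul_pow_eq_zero {R : Type*} [CommRing R] (x : R)
    {m N : ℕ} (h : m < N) :
    ∑ j ∈ range (N + 1), (-1) ^ j * (N.choose j : R) * ((N - j : ℕ) + x) ^ m = 0 := by
  have hΔ := congr_fun (fwdDiff_iter_pow_eq_zero_of_lt (R := R) h) x
  rw [fwdDiff_iter_eq_sum_shift, ← sum_range_reflect, Pi.zero_apply] at hΔ
  rw [← hΔ]
  refine sum_congr rfl fun j hj ↦ ?_
  have hj : j ≤ N := Nat.lt_succ_iff.mp (mem_range.mp hj)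
  rw [add_tsub_cancel_right, Nat.sub_sub_self hj, Nat.choose_symm hj, zsmul_eq_mul, nsmul_one]
  push_cast
  ring

theorem sum_Icc_alternating_choose_mul_pow {R : Type*} [CommRing R] (x : R)
    {m N : ℕ} (h : m < N) :
    ∑ j ∈ Icc 1 N, (-1) ^ (j - 1) * (N.choose j : R) * ((N - j : ℕ) + x) ^ m = (N + x) ^ m := by
  have h0 := sum_range_alternating_choose_mul_pow_eq_zero x h
  rw [Nat.range_succ_eq_Icc_zero, ← add_sum_Ioc_eq_sum_Icc N.zero_le,
    ← Icc_add_one_left_eq_Ioc, zero_add, pow_zero, Nat.choose_zero_right, Nat.cast_one, one_mul,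
    Nat.sub_zero] at h0
  have hsign : ∑ j ∈ Icc 1 N, (-1) ^ (j - 1) * (N.choose j : R) * ((N - j : ℕ) + x) ^ m =
      -∑ j ∈ Icc 1 N, (-1) ^ j * (N.choose j : R) * ((N - j : ℕ) + x) ^ m := by
    rw [← sum_neg_distrib]
    refine sum_congr rfl fun j hj ↦ ?_
    obtain ⟨i, rfl⟩ : ∃ i, j = i + 1 := ⟨j - 1, by grind⟩
    simp [pow_succ]
  rw [hsign]
  linear_combination -h0

-- At `b = 0` the exponent `b - 1` truncates to `0`; the identity survives because the base is `1`.
theorem pow_mul_pow_pred_eq_pow_of_add_eq {b j n : ℕ} (h : b + j = n + 1) :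
    ((b : ℤ) + 1) ^ j * ((b : ℤ) + 1) ^ (b - 1) = ((b : ℤ) + 1) ^ n := by
  cases b with
  | zero => simp
  | succ b =>
    rw [← pow_add]
    congr 1
    omega

/-- for `u(m) = m`, the Kung–Yan count equals the classical
number of parking functions, `(n+1)^{n-1}`. -/
theorem stmt_17 : ∀ n : ℕ, fSeq (fun m => m) n = ((n : ℤ) + 1) ^ (n - 1) := by
  intro n
  induction n using Nat.strong_induction_on with
  | _ n IH =>
    cases n with
    | zero => simp [fSeq]
    | succ n =>
      rw [fSeq, sum_attach (Icc 1 (n + 1)) fun j ↦ (-1) ^ (j - 1) * ((n + 1).choose j : ℤ) *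
        ((n + 1 - j + 1 : ℕ) : ℤ) ^ j * fSeq (fun m => m) (n + 1 - j)]
      calc _ = ∑ j ∈ Icc 1 (n + 1),
              (-1) ^ (j - 1) * ((n + 1).choose j : ℤ) * (((n + 1 - j : ℕ) : ℤ) + 1) ^ n :=
            sum_congr rfl fun j hj ↦ by
              obtain ⟨hj1, hjn⟩ := mem_Icc.mp hj
              rw [IH _ (by omega), mul_assoc, Nat.cast_succ,
                pow_mul_pow_pred_eq_pow_of_add_eq (n := n) (by omega)]
        _ = _ := by
          rw [sum_Icc_alternating_choose_mul_pow (1 : ℤ) n.lt_succ_self, Nat.add_sub_cancel]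
end
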